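/- Let E be a finite-dimensional real inner product space, X ⊆ E, and x ∈ X. Then x is apocalyptic — i.e., there exist a sequence (x_k) in X converging to x and a continuously differentiable f : E → ℝ with s(−∇f(x_k), T_{x_k}X) → 0 and s(−∇f(x), T_xX) > 0 — if and only if there exists a sequence (x_k) in X converging to x such that T_xX is not contained in the closure of the convex hull of limsup_k T_{x_k}X. -/

import Mathlib

open Filter Topology

/-- The Bouligand tangent cone of `X ⊆ E` at `x`. -/
def bTangentCone {E : Type*} [NormedAddCommGroup E] [NormedSpace ℝ E]
    (X : Set E) (x : E) : Set E :=
  {v | ∃ (xk : ℕ → E) (τ : ℕ → ℝ), (∀ k, xk k ∈ X) ∧ (∀ k, 0 < τ k) ∧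
    Tendsto τ atTop (𝓝 0) ∧ Tendsto (fun k => (τ k)⁻¹ • (xk k - x)) atTop (𝓝 v)}

/-- The polar of a set `K ⊆ E`: `K° = {w : ⟪w, z⟫ ≤ 0 for all z ∈ K}`. -/
def polarCone {E : Type*} [NormedAddCommGroup E] [InnerProductSpace ℝ E] (K : Set E) : Set E :=
  {w | ∀ z ∈ K, (inner ℝ w z : ℝ) ≤ 0}

/-- The stationarity measure `s(v, K) = max(0, sup{⟪v, z⟫ : z ∈ K, ‖z‖ = 1})`; note that on `ℝ`,
Lean's `sSup` of the empty set is `0`, matching the convention `sup ∅ = 0`. -/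
noncomputable def statMeasure {E : Type*} [NormedAddCommGroup E] [InnerProductSpace ℝ E]
    (v : E) (K : Set E) : ℝ :=
  max 0 (sSup {t : ℝ | ∃ z ∈ K, ‖z‖ = 1 ∧ (inner ℝ v z : ℝ) = t})

/-- The outer limit `limsup_k S_k`: points `u` for which there are a strictly increasing sequence
of indices `(k_i)` and points `u_i ∈ S_{k_i}` with `u_i → u`. -/
def outerLimit {E : Type*} [NormedAddCommGroup E] (S : ℕ → Set E) : Set E :=
  {u | ∃ φ : ℕ → ℕ, StrictMono φ ∧
    ∃ uk : ℕ → E, (∀ i, uk i ∈ S (φ i)) ∧ Tendsto uk atTop (𝓝 u)}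

open Set
open scoped RealInnerProductSpace

/-!
Both conditions are about the polar of `C = cl conv (limsup_k T_{x_k}X)`. If
`s(−∇f(x_k), T_{x_k}X) → 0` with `x_k → x`, then `−∇f(x)`, the limit of `−∇f(x_k)`, is nonpositive
on every limit of tangent directions, i.e. lies in the polar of `C`; as `s(−∇f(x), T_xX) > 0` gives
a direction of `T_xX` on which it is positive, `T_xX ⊄ C`. Conversely, a direction `w ∈ T_xX \ C`
is separated from the closed convex cone `C` by some `v` in its polar, and `f = −⟪v, ·⟫` works: a
sequence of unit directions of `T_{x_k}X` along which `⟪v, ·⟫` stays bounded away from `0` would,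
by compactness of the unit sphere, produce a direction of `C` on which `v` is positive.
-/

def IsCone {E : Type*} [AddCommGroup E] [Module ℝ E] (K : Set E) : Prop :=
  ∀ u ∈ K, ∀ r : ℝ, 0 < r → r • u ∈ K

section Cone

variable {E : Type*} [AddCommGroup E] [Module ℝ E] {K : Set E}

theorem IsCone.convexHull (hK : IsCone K) : IsCone (_root_.convexHull ℝ K) := by
  intro u hu r hr
  have hmaps : _root_.convexHull ℝ K ⊆ (r • ·) ⁻¹' _root_.convexHull ℝ K :=
    convexHull_min (fun y hy => subset_convexHull ℝ K (hK y hy r hr))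
      ((convex_convexHull ℝ K).is_linear_preimage (IsLinearMap.isLinearMap_smul r))
  exact hmaps hu

theorem IsCone.closure [TopologicalSpace E] [ContinuousConstSMul ℝ E] (hK : IsCone K) :
    IsCone (_root_.closure K) := fun _ hu r hr =>
  (MapsTo.closure (fun v hv => hK v hv r hr) (continuous_const_smul r)) hu

end Cone

section TangentCone

variable {E : Type*} [NormedAddCommGroup E]

theorem zero_mem_outerLimit {S : ℕ → Set E} (hS : ∀ k, (0 : E) ∈ S k) : (0 : E) ∈ outerLimit S :=
  ⟨id, strictMono_id, fun _ => 0, hS, tendsto_const_nhds⟩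

variable [NormedSpace ℝ E]

theorem zero_mem_bTangentCone {X : Set E} {x : E} (hx : x ∈ X) : (0 : E) ∈ bTangentCone X x := by
  refine ⟨fun _ => x, fun k => ((k : ℝ) + 1)⁻¹, fun _ => hx, fun k => by positivity, ?_, ?_⟩
  · simpa [one_div] using tendsto_one_div_add_atTop_nhds_zero_nat (𝕜 := ℝ)
  · simp

theorem isCone_bTangentCone (X : Set E) (x : E) : IsCone (bTangentCone X x) := by
  rintro v ⟨xk, τ, hX, hτ, hτ0, hlim⟩ r hr
  refine ⟨xk, fun k => τ k / r, hX, fun k => div_pos (hτ k) hr, by simpa using hτ0.div_const r, ?_⟩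
  have h : ∀ k, (τ k / r)⁻¹ • (xk k - x) = r • ((τ k)⁻¹ • (xk k - x)) := fun k => by
    rw [inv_div, div_eq_mul_inv, mul_smul]
  simpa only [h] using hlim.const_smul r

theorem isCone_outerLimit {S : ℕ → Set E} (hS : ∀ k, IsCone (S k)) : IsCone (outerLimit S) := by
  rintro u ⟨φ, hφ, uk, huk, hlim⟩ r hr
  exact ⟨φ, hφ, fun i => r • uk i, fun i => hS _ _ (huk i) r hr, hlim.const_smul r⟩

end TangentCone

section StatMeasure

variable {E : Type*} [NormedAddCommGroup E] [InnerProductSpace ℝ E] {K : Set E} {v : E}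

theorem statMeasure_nonneg (v : E) (K : Set E) : 0 ≤ statMeasure v K := le_max_left _ _

theorem inner_le_statMeasure {z : E} (hz : z ∈ K) (hz1 : ‖z‖ = 1) : ⟪v, z⟫ ≤ statMeasure v K := by
  have hbdd : BddAbove {t : ℝ | ∃ z ∈ K, ‖z‖ = 1 ∧ ⟪v, z⟫ = t} := by
    refine ⟨‖v‖, ?_⟩
    rintro t ⟨z, -, hz1, rfl⟩
    simpa [hz1] using real_inner_le_norm v z
  exact (le_csSup hbdd ⟨z, hz, hz1, rfl⟩).trans (le_max_right _ _)

theorem exists_inner_gt_of_lt_statMeasure {a : ℝ} (ha : 0 ≤ a) (h : a < statMeasure v K) :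
    ∃ z ∈ K, ‖z‖ = 1 ∧ a < ⟪v, z⟫ := by
  have hs : a < sSup {t : ℝ | ∃ z ∈ K, ‖z‖ = 1 ∧ ⟪v, z⟫ = t} :=
    (lt_max_iff.1 h).resolve_left ha.not_gt
  have hne : {t : ℝ | ∃ z ∈ K, ‖z‖ = 1 ∧ ⟪v, z⟫ = t}.Nonempty := by
    by_contra hne
    rw [not_nonempty_iff_eq_empty.1 hne, Real.sSup_empty] at hs
    exact ha.not_gt hs
  obtain ⟨-, ⟨z, hz, hz1, rfl⟩, hlt⟩ := exists_lt_of_lt_csSup hne hs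
  exact ⟨z, hz, hz1, hlt⟩

theorem IsCone.inner_le_statMeasure_mul_norm (hK : IsCone K) {u : E} (hu : u ∈ K) :
    ⟪v, u⟫ ≤ statMeasure v K * ‖u‖ := by
  rcases eq_or_ne u 0 with rfl | hu0
  · simp
  have hn : 0 < ‖u‖ := norm_pos_iff.2 hu0
  have hunit : ‖‖u‖⁻¹ • u‖ = 1 := by
    rw [norm_smul, norm_inv, norm_norm, inv_mul_cancel₀ hn.ne']
  have h := inner_le_statMeasure (v := v) (hK u hu _ (inv_pos.2 hn)) hunit
  rw [real_inner_smul_right, inv_mul_le_iff₀ hn] at h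
  linarith

theorem IsCone.statMeasure_pos_iff (hK : IsCone K) :
    0 < statMeasure v K ↔ ∃ z ∈ K, 0 < ⟪v, z⟫ := by
  constructor
  · intro h
    obtain ⟨z, hz, -, hvz⟩ := exists_inner_gt_of_lt_statMeasure le_rfl h
    exact ⟨z, hz, hvz⟩
  · rintro ⟨z, hz, hvz⟩
    have h := hK.inner_le_statMeasure_mul_norm (v := v) hz
    exact pos_of_mul_pos_left (hvz.trans_le h) (norm_nonneg z)

end StatMeasure

section Polar

variable {E : Type*} [NormedAddCommGroup E] [InnerProductSpace ℝ E]

theorem polarCone_closure_convexHull (s : Set E) :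
    polarCone (closure (convexHull ℝ s)) = polarCone s := by
  ext v
  refine ⟨fun hv z hz => hv z (subset_closure (subset_convexHull ℝ s hz)), fun hv => ?_⟩
  have hhalf : closure (convexHull ℝ s) ⊆ {u | ⟪v, u⟫ ≤ 0} :=
    closure_minimal (convexHull_min hv (convex_halfSpace_le (innerₛₗ ℝ v).isLinear 0))
      (isClosed_le (continuous_const.inner continuous_id) continuous_const)
  exact hhalf

theorem exists_mem_polarCone_inner_pos [CompleteSpace E] {C : Set E} (hconv : Convex ℝ C)
    (hclosed : IsClosed C) (hcone : IsCone C) (h0 : (0 : E) ∈ C) {w : E} (hw : w ∉ C) :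
    ∃ v ∈ polarCone C, 0 < ⟪v, w⟫ := by
  obtain ⟨f, a, hfC, hfw⟩ := geometric_hahn_banach_closed_point hconv hclosed hw
  have hinner : ∀ y, ⟪(InnerProductSpace.toDual ℝ E).symm f, y⟫ = f y := fun _ =>
    InnerProductSpace.toDual_symm_apply
  have ha : 0 < a := by simpa using hfC 0 h0
  refine ⟨(InnerProductSpace.toDual ℝ E).symm f, fun c hc => ?_, by rw [hinner]; linarith⟩
  rw [hinner]
  by_contra! hfc
  -- a cone on which `f` is positive somewhere is not bounded above by `f < a`
  have h := hfC _ (hcone c hc ((a + 1) / f c) (by positivity))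
  rw [map_smul, smul_eq_mul, div_mul_cancel₀ _ hfc.ne'] at h
  linarith

theorem mem_polarCone_outerLimit_of_tendsto {K : ℕ → Set E} (hK : ∀ k, IsCone (K k))
    {v : ℕ → E} {w : E} (hv : Tendsto v atTop (𝓝 w))
    (hs : Tendsto (fun k => statMeasure (v k) (K k)) atTop (𝓝 0)) :
    w ∈ polarCone (outerLimit K) := by
  rintro u ⟨φ, hφ, uk, huk, hlim⟩
  have hbound : ∀ i, ⟪w, uk i⟫ ≤ statMeasure (v (φ i)) (K (φ i)) * ‖uk i‖ + ⟪w - v (φ i), uk i⟫ :=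
    fun i => by
      have h := (hK (φ i)).inner_le_statMeasure_mul_norm (v := v (φ i)) (huk i)
      rw [inner_sub_left]
      linarith
  have hright : Tendsto (fun i => statMeasure (v (φ i)) (K (φ i)) * ‖uk i‖ + ⟪w - v (φ i), uk i⟫)
      atTop (𝓝 (0 * ‖u‖ + ⟪w - w, u⟫)) :=
    ((hs.comp hφ.tendsto_atTop).mul hlim.norm).add
      ((tendsto_const_nhds.sub (hv.comp hφ.tendsto_atTop)).inner hlim)
  simpa using le_of_tendsto_of_tendsto' (tendsto_const_nhds.inner hlim) hright hbound

theorem tendsto_statMeasure_of_mem_polarCone_outerLimit [ProperSpace E] {K : ℕ → Set E} {v : E}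
    (hv : v ∈ polarCone (outerLimit K)) :
    Tendsto (fun k => statMeasure v (K k)) atTop (𝓝 0) := by
  refine tendsto_order.2 ⟨fun a ha => Eventually.of_forall fun k =>
    ha.trans_le (statMeasure_nonneg _ _), fun ε hε => ?_⟩
  by_contra h
  obtain ⟨φ, hφ, hge⟩ := extraction_of_frequently_atTop (not_eventually.1 h)
  have hdir : ∀ i, ∃ z ∈ K (φ i), ‖z‖ = 1 ∧ ε / 2 < ⟪v, z⟫ := fun i =>
    exists_inner_gt_of_lt_statMeasure (by positivity) (by linarith [not_lt.1 (hge i)])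
  choose z hzK hz1 hvz using hdir
  obtain ⟨z₀, -, ψ, hψ, hlim⟩ :=
    (isCompact_sphere (0 : E) 1).tendsto_subseq fun i => mem_sphere_zero_iff_norm.2 (hz1 i)
  have hz₀ : z₀ ∈ outerLimit K := ⟨φ ∘ ψ, hφ.comp hψ, z ∘ ψ, fun j => hzK (ψ j), hlim⟩
  have hvz₀ : ε / 2 ≤ ⟪v, z₀⟫ :=
    ge_of_tendsto (tendsto_const_nhds.inner hlim) (Eventually.of_forall fun j => (hvz (ψ j)).le)
  linarith [hv z₀ hz₀]

theorem hasGradientAt_inner_const [CompleteSpace E] (v x : E) :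
    HasGradientAt (fun y => ⟪v, y⟫) v x := by
  rw [hasGradientAt_iff_hasFDerivAt]
  exact (innerSL ℝ v).hasFDerivAt

end Polar

theorem stmt10_general {E : Type*} [NormedAddCommGroup E] [InnerProductSpace ℝ E] [FiniteDimensional ℝ E]
    (X : Set E) (x : E) :
    (∃ (xk : ℕ → E) (f : E → ℝ), (∀ k, xk k ∈ X) ∧ Tendsto xk atTop (𝓝 x) ∧
      ContDiff ℝ 1 f ∧
      Tendsto (fun k => statMeasure (-gradient f (xk k)) (bTangentCone X (xk k))) atTop (𝓝 0) ∧
      0 < statMeasure (-gradient f x) (bTangentCone X x)) ↔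
    (∃ xk : ℕ → E, (∀ k, xk k ∈ X) ∧ Tendsto xk atTop (𝓝 x) ∧
      ¬ bTangentCone X x ⊆
          closure (convexHull ℝ (outerLimit fun k => bTangentCone X (xk k)))) := by
  constructor
  · rintro ⟨xk, f, hX, hxk, hf, hstat, hpos⟩
    refine ⟨xk, hX, hxk, fun hsub => ?_⟩
    obtain ⟨z, hz, hvz⟩ := (isCone_bTangentCone X x).statMeasure_pos_iff.1 hpos
    have hgrad : Continuous (gradient f) :=
      (InnerProductSpace.toDual ℝ E).symm.continuous.comp (hf.continuous_fderiv one_ne_zero)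
    have hpolar := mem_polarCone_outerLimit_of_tendsto (fun k => isCone_bTangentCone X (xk k))
      ((hgrad.tendsto x).comp hxk).neg hstat
    rw [← polarCone_closure_convexHull] at hpolar
    exact (hpolar z (hsub hz)).not_gt hvz
  · rintro ⟨xk, hX, hxk, hnsub⟩
    obtain ⟨w, hw, hwC⟩ := not_subset.1 hnsub
    have hcone := isCone_outerLimit fun k => isCone_bTangentCone X (xk k)
    have h0 := zero_mem_outerLimit fun k => zero_mem_bTangentCone (hX k)
    obtain ⟨v, hv, hvw⟩ := exists_mem_polarCone_inner_pos (convex_convexHull ℝ _).closure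
      isClosed_closure hcone.convexHull.closure (subset_closure (subset_convexHull ℝ _ h0)) hwC
    have hgrad : ∀ y, -gradient (fun y => ⟪-v, y⟫) y = v := fun y => by
      rw [(hasGradientAt_inner_const (-v) y).gradient, neg_neg]
    refine ⟨xk, fun y => ⟪-v, y⟫, hX, hxk, (innerSL ℝ (-v)).contDiff, ?_, ?_⟩
    · rw [polarCone_closure_convexHull] at hv
      simp only [hgrad]
      exact tendsto_statMeasure_of_mem_polarCone_outerLimit hv
    · rw [hgrad]
      exact (isCone_bTangentCone X x).statMeasure_pos_iff.2 ⟨w, hw, hvw⟩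

/-- Let `E` be a finite-dimensional real inner product space, `X ⊆ E`, `x ∈ X`.
Then `x` is apocalyptic — i.e. there exist a sequence `(x_k)` in `X` converging to `x` and a
continuously differentiable `f : E → ℝ` with `s(−∇f(x_k), T_{x_k}X) → 0` and
`s(−∇f(x), T_xX) > 0` — if and only if there exists a sequence `(x_k)` in `X` converging to `x`
such that `T_xX` is not contained in the closure of the convex hull of `limsup_k T_{x_k}X`. -/
theorem stmt10 {E : Type*} [NormedAddCommGroup E] [InnerProductSpace ℝ E] [FiniteDimensional ℝ E]
    (X : Set E) (x : E) (hx : x ∈ X) :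
    (∃ (xk : ℕ → E) (f : E → ℝ), (∀ k, xk k ∈ X) ∧ Tendsto xk atTop (𝓝 x) ∧
      ContDiff ℝ 1 f ∧
      Tendsto (fun k => statMeasure (-gradient f (xk k)) (bTangentCone X (xk k))) atTop (𝓝 0) ∧
      0 < statMeasure (-gradient f x) (bTangentCone X x)) ↔
    (∃ xk : ℕ → E, (∀ k, xk k ∈ X) ∧ Tendsto xk atTop (𝓝 x) ∧
      ¬ bTangentCone X x ⊆
          closure (convexHull ℝ (outerLimit fun k => bTangentCone X (xk k)))) :=
  stmt10_general X x
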